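/- arXiv:2105.10418 — 2 statements merged into one kernel-verified Lean document; each statement's English description precedes it below -/
import Mathlib

section
/- Let X be a set with the Ulam property and let P be a purely finitely additive Markov kernel on X. Then P has no nonzero countably additive invariant measure: every finite measure μ on (X, ⊤) satisfying μ(E) = ∫_X P(x,E) μ(dx) for all E ⊆ X is identically zero; in particular there is no countably additive invariant probability measure (Δ_ca = ∅). -/
open MeasureTheory Set

/-- A finitely additive (signed) measure on all subsets of `X`. -/
def IsFA {X : Type*} (μ : Set X → ℝ) : Prop :=
  μ ∅ = 0 ∧ ∀ A B : Set X, Disjoint A B → μ (A ∪ B) = μ A + μ B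

/-- A nonnegative finitely additive measure on all subsets of `X`. -/
def IsNNFA {X : Type*} (μ : Set X → ℝ) : Prop :=
  IsFA μ ∧ ∀ E : Set X, 0 ≤ μ E

/-- A (bounded, nonnegative) countably additive measure on all subsets of `X`:
a nonnegative finitely additive measure which is countably additive. -/
def IsCA {X : Type*} (μ : Set X → ℝ) : Prop :=
  IsNNFA μ ∧ ∀ E : ℕ → Set X, Pairwise (Function.onFun Disjoint E) →
    HasSum (fun n => μ (E n)) (μ (⋃ n, E n))

/-- A purely finitely additive measure: every countably additive measure
dominated by it is identically zero. -/
def IsPFA {X : Type*} (μ : Set X → ℝ) : Prop :=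
  IsNNFA μ ∧ ∀ ν : Set X → ℝ, IsCA ν → (∀ E : Set X, ν E ≤ μ E) → ν = 0

/-- `X` has the Ulam property: every countably additive measure on all subsets of `X`
vanishing on every singleton is identically zero. -/
def UlamProperty (X : Type*) : Prop :=
  ∀ ν : Set X → ℝ, IsCA ν → (∀ x : X, ν {x} = 0) → ν = 0

/-- A purely finitely additive measure vanishes on singletons. -/
lemma pfa_singleton {X : Type*} {p : Set X → ℝ} (h : IsPFA p) (y : X) : p {y} = 0 := by
  classical
  set c := p {y} with hc
  have hmono : ∀ A B : Set X, A ⊆ B → p A ≤ p B := by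
    intro A B hAB
    have hadd := h.1.1.2 A (B \ A) disjoint_sdiff_right
    rw [Set.union_diff_cancel hAB] at hadd
    linarith [h.1.2 (B \ A)]
  set ν : Set X → ℝ := fun E => if y ∈ E then c else 0 with hν
  have hc0 : 0 ≤ c := h.1.2 {y}
  have hCA : IsCA ν := by
    refine ⟨⟨⟨by simp [hν], ?_⟩, ?_⟩, ?_⟩
    · intro A B hAB
      by_cases hA : y ∈ A
      · have hB : y ∉ B := fun hB => (hAB.ne_of_mem hA hB) rfl
        simp [hν, hA, hB]
      · by_cases hB : y ∈ B <;> simp [hν, hA, hB]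
    · intro E; by_cases hE : y ∈ E <;> simp [hν, hE, hc0]
    · intro E hE
      by_cases hy : ∃ n, y ∈ E n
      · obtain ⟨m, hm⟩ := hy
        have hiff : ∀ n, y ∈ E n ↔ n = m := by
          intro n
          constructor
          · intro hn
            by_contra hne
            exact (hE hne).ne_of_mem hn hm rfl
          · rintro rfl; exact hm
        have h1 : ν (⋃ n, E n) = c := by
          simp only [hν]
          rw [if_pos (Set.mem_iUnion.mpr ⟨m, hm⟩)]
        rw [h1]
        have h2 : (fun n => ν (E n)) = fun n => if n = m then c else 0 := by
          funext n; simp only [hν, hiff n]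
        rw [h2]
        exact hasSum_ite_eq m c
      · push_neg at hy
        have h1 : ν (⋃ n, E n) = 0 := by
          simp only [hν]
          rw [if_neg (by simp [hy])]
        have h2 : (fun n => ν (E n)) = fun _ => 0 := by
          funext n; simp [hν, hy n]
        rw [h1, h2]
        exact hasSum_zero
  have hle : ∀ E : Set X, ν E ≤ p E := by
    intro E
    by_cases hE : y ∈ E
    · simpa [hν, hE] using hmono {y} E (Set.singleton_subset_iff.mpr hE)
    · simpa [hν, hE] using h.1.2 E
  have := h.2 ν hCA hle
  have : ν {y} = 0 := by rw [this]; rfl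
  simpa [hν] using this

/-- on a set with the Ulam property, a purely finitely additive Markov
kernel has no nonzero countably additive invariant measure. -/
theorem pfa_kernel_no_ca_invariant_measure {X : Type*} (hU : UlamProperty X)
    (P : X → Set X → ℝ)
    (hker : ∀ x : X, IsPFA (P x) ∧ P x Set.univ = 1)
    (μ : @MeasureTheory.Measure X ⊤) (hfin : μ Set.univ ≠ ⊤)
    (hinv : ∀ E : Set X, (μ E).toReal = ∫ x, P x E ∂μ) :
    μ = 0 := by
  letI : MeasurableSpace X := ⊤
  have hmeas : ∀ s : Set X, MeasurableSet s := fun s => MeasurableSpace.measurableSet_top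
  have hEne : ∀ E : Set X, μ E ≠ ⊤ := fun E =>
    ne_top_of_le_ne_top hfin (measure_mono (subset_univ E))
  -- the kernel vanishes on singletons
  have hPsing : ∀ x y : X, P x {y} = 0 := fun x y => pfa_singleton (hker x).1 y
  -- ν := real-valued version of μ
  set ν : Set X → ℝ := fun E => (μ E).toReal with hν
  have hCA : IsCA ν := by
    refine ⟨⟨⟨by simp [hν], ?_⟩, fun E => ENNReal.toReal_nonneg⟩, ?_⟩
    · intro A B hAB
      simp only [hν]
      rw [measure_union hAB (hmeas B), ENNReal.toReal_add (hEne A) (hEne B)]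
    · intro E hE
      have h1 : μ (⋃ n, E n) = ∑' n, μ (E n) :=
        measure_iUnion hE (fun n => hmeas (E n))
      have h2 : ∑' n, μ (E n) ≠ ⊤ := by rw [← h1]; exact hEne _
      have h3 := ENNReal.hasSum_toReal h2
      have h4 : (∑' n, (μ (E n)).toReal) = (μ (⋃ n, E n)).toReal := by
        rw [h1, ENNReal.tsum_toReal_eq (fun n => hEne (E n))]
      rw [h4] at h3
      exact h3
  have hsing : ∀ y : X, ν {y} = 0 := by
    intro y
    have h1 := hinv {y}
    have h2 : (fun x => P x {y}) = fun _ => (0 : ℝ) := funext fun x => hPsing x y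
    rw [h2, integral_zero] at h1
    simpa [hν] using h1
  have hzero := hU ν hCA hsing
  ext s hs
  have : ν s = 0 := by rw [hzero]; rfl
  have : (μ s).toReal = 0 := this
  have := (ENNReal.toReal_eq_zero_iff _).mp this
  simpa using this.resolve_right (hEne s)
end

section
/- Let X be a set with the Ulam property, and let P(x,E) = P_ca(x,E) + P_pfa(x,E) be a combined non-degenerate finitely additive Markov chain on X with weights q₁, q₂ (so 0 < q₁ < 1 and q₂ = 1 − q₁ > 0). Then this Markov chain has no invariant countably additive probability measure: there is no probability measure μ on (X, ⊤) satisfying μ(E) = ∫_X P_ca(x,E) μ(dx) + ∫_X P_pfa(x,E) μ(dx) for all E ⊆ X (i.e., Δ_ca = ∅). -/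
open MeasureTheory Set

lemma IsNNFA.mono {X : Type*} {μ : Set X → ℝ} (h : IsNNFA μ) {A B : Set X}
    (hAB : A ⊆ B) : μ A ≤ μ B := by
  have : μ B = μ A + μ (B \ A) := by
    rw [← h.1.2 A (B \ A) disjoint_sdiff_right, Set.union_diff_cancel hAB]
  rw [this]
  linarith [h.2 (B \ A)]

lemma IsPFA.singleton {X : Type*} {μ : Set X → ℝ} (h : IsPFA μ) (y : X) :
    μ {y} = 0 := by
  classical
  set ν : Set X → ℝ := fun E => if y ∈ E then μ {y} else 0 with hν
  have hca : IsCA ν := by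
    refine ⟨⟨⟨by simp [hν], ?_⟩, ?_⟩, ?_⟩
    · intro A B hAB
      by_cases hA : y ∈ A
      · have hB : y ∉ B := Set.disjoint_left.mp hAB hA
        simp [hν, hA, hB]
      · by_cases hB : y ∈ B <;> simp [hν, hA, hB]
    · intro E
      by_cases hE : y ∈ E <;> simp [hν, hE, h.1.2 {y}]
    · intro E hE
      by_cases hy : y ∈ ⋃ n, E n
      · obtain ⟨n₀, hn₀⟩ := Set.mem_iUnion.mp hy
        have heq : (fun n => ν (E n)) = fun n => if n = n₀ then μ {y} else 0 := by
          funext n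
          by_cases hn : n = n₀
          · simp [hν, hn, hn₀]
          · have : y ∉ E n := fun hyn =>
              Set.disjoint_left.mp (hE hn) hyn hn₀
            simp [hν, hn, this]
        rw [heq]
        simpa [hν, hy] using hasSum_ite_eq n₀ (μ {y})
      · have heq : (fun n => ν (E n)) = fun _ => (0 : ℝ) := by
          funext n
          have : y ∉ E n := fun hyn => hy (Set.mem_iUnion.mpr ⟨n, hyn⟩)
          simp [hν, this]
        rw [heq]
        simpa [hν, hy] using hasSum_zero
  have hdom : ∀ E : Set X, ν E ≤ μ E := by
    intro E
    by_cases hE : y ∈ E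
    · simpa [hν, hE] using h.1.mono (Set.singleton_subset_iff.mpr hE)
    · simpa [hν, hE] using h.1.2 E
  have := h.2 ν hca hdom
  have hy : ν {y} = 0 := by rw [this]; rfl
  simpa [hν] using hy

/-- on a set with the Ulam property, a combined non-degenerate finitely
additive Markov chain has no invariant countably additive probability measure. -/
theorem combined_chain_no_invariant_ca_probability {X : Type*} (hU : UlamProperty X)
    (q1 q2 : ℝ) (hq1 : 0 < q1) (hq1' : q1 < 1) (hq2 : q2 = 1 - q1)
    (Pca Ppfa : X → Set X → ℝ)
    (hca : ∀ x : X, IsCA (Pca x) ∧ Pca x Set.univ = q1)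
    (hpfa : ∀ x : X, IsPFA (Ppfa x) ∧ Ppfa x Set.univ = q2) :
    ¬ ∃ μ : @MeasureTheory.Measure X ⊤, μ Set.univ = 1 ∧
      ∀ E : Set X, (μ E).toReal = (∫ x, Pca x E ∂μ) + ∫ x, Ppfa x E ∂μ := by
  rintro ⟨μ, hμ1, hinv⟩
  letI : MeasurableSpace X := ⊤
  haveI : IsFiniteMeasure μ := ⟨by rw [hμ1]; exact ENNReal.one_lt_top⟩
  have hq2pos : 0 < q2 := by rw [hq2]; linarith
  -- bounds on the kernels
  have hPca_nonneg : ∀ x E, 0 ≤ Pca x E := fun x E => (hca x).1.1.2 E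
  have hPca_le : ∀ x E, Pca x E ≤ q1 := fun x E => by
    simpa [(hca x).2] using (hca x).1.1.mono (Set.subset_univ E)
  have hPpfa_nonneg : ∀ x E, 0 ≤ Ppfa x E := fun x E => (hpfa x).1.1.2 E
  have hPpfa_le : ∀ x E, Ppfa x E ≤ q2 := fun x E => by
    simpa [(hpfa x).2] using (hpfa x).1.1.mono (Set.subset_univ E)
  -- integrability
  have hint : ∀ (f : X → ℝ) (C : ℝ), (∀ x, 0 ≤ f x) → (∀ x, f x ≤ C) →
      Integrable f μ := by
    intro f C h0 hC
    refine (integrable_const C).mono' measurable_from_top.aestronglyMeasurable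
      (Filter.Eventually.of_forall fun x => ?_)
    rw [Real.norm_eq_abs, abs_of_nonneg (h0 x)]
    exact hC x
  have hintca : ∀ E, Integrable (fun x => Pca x E) μ := fun E =>
    hint _ q1 (fun x => hPca_nonneg x E) (fun x => hPca_le x E)
  have hintpfa : ∀ E, Integrable (fun x => Ppfa x E) μ := fun E =>
    hint _ q2 (fun x => hPpfa_nonneg x E) (fun x => hPpfa_le x E)
  -- the purely finitely additive component of the invariance equation
  set lam : Set X → ℝ := fun E => ∫ x, Ppfa x E ∂μ with hlam
  -- lam vanishes on singletons
  have hsing : ∀ y : X, lam {y} = 0 := by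
    intro y
    have : (fun x => Ppfa x {y}) = fun _ => (0 : ℝ) := by
      funext x; exact (hpfa x).1.singleton y
    simp [hlam, this]
  -- lam is countably additive (via the invariance equation)
  have hfa : IsFA lam := by
    constructor
    · have : (fun x => Ppfa x ∅) = fun _ => (0 : ℝ) := by
        funext x; exact (hpfa x).1.1.1.1
      simp [hlam, this]
    · intro A B hAB
      have : (fun x => Ppfa x (A ∪ B)) = fun x => Ppfa x A + Ppfa x B := by
        funext x; exact (hpfa x).1.1.1.2 A B hAB
      simp only [hlam, this]
      exact integral_add (hintpfa A) (hintpfa B)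
  have hnn : ∀ E, 0 ≤ lam E := fun E =>
    integral_nonneg fun x => hPpfa_nonneg x E
  have hcount : ∀ E : ℕ → Set X, Pairwise (Function.onFun Disjoint E) →
      HasSum (fun n => lam (E n)) (lam (⋃ n, E n)) := by
    intro E hE
    -- μ-part has sum
    have hμfin : ∀ s : Set X, μ s ≠ ⊤ := fun s => measure_ne_top μ s
    have hμsum : HasSum (fun n => (μ (E n)).toReal) ((μ (⋃ n, E n)).toReal) := by
      have hmeas : ∀ n, MeasurableSet (E n) := fun n => trivial
      have hU' : μ (⋃ n, E n) = ∑' n, μ (E n) := measure_iUnion hE hmeas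
      have hne : ∑' n, μ (E n) ≠ ⊤ := by rw [← hU']; exact hμfin _
      have := ENNReal.hasSum_toReal hne
      rwa [← ENNReal.tsum_toReal_eq (fun n => hμfin _), ← hU'] at this
    -- Pca-part has sum, via dominated convergence on partial sums
    have hcasum : HasSum (fun n => ∫ x, Pca x (E n) ∂μ)
        (∫ x, Pca x (⋃ n, E n) ∂μ) := by
      rw [hasSum_iff_tendsto_nat_of_nonneg
        (fun n => integral_nonneg fun x => hPca_nonneg x (E n))]
      have hptsum : ∀ x, HasSum (fun n => Pca x (E n)) (Pca x (⋃ n, E n)) :=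
        fun x => (hca x).1.2 E hE
      have heq : ∀ N : ℕ, ∑ i ∈ Finset.range N, ∫ x, Pca x (E i) ∂μ =
          ∫ x, ∑ i ∈ Finset.range N, Pca x (E i) ∂μ := by
        intro N
        exact (integral_finset_sum _ fun i _ => hintca (E i)).symm
      simp only [heq]
      refine tendsto_integral_of_dominated_convergence (fun _ => q1)
        (fun n => measurable_from_top.aestronglyMeasurable)
        (integrable_const q1) (fun n => Filter.Eventually.of_forall fun x => ?_)
        (Filter.Eventually.of_forall fun x => (hptsum x).tendsto_sum_nat)
      rw [Real.norm_eq_abs, abs_of_nonneg (Finset.sum_nonneg fun i _ => hPca_nonneg x (E i))]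
      calc ∑ i ∈ Finset.range n, Pca x (E i) ≤ Pca x (⋃ n, E n) :=
            sum_le_hasSum _ (fun i _ => hPca_nonneg x (E i)) (hptsum x)
        _ ≤ q1 := hPca_le x _
    have key : ∀ s : Set X, lam s = (μ s).toReal - ∫ x, Pca x s ∂μ := by
      intro s; rw [hinv s]; ring
    have : HasSum (fun n => (μ (E n)).toReal - ∫ x, Pca x (E n) ∂μ)
        ((μ (⋃ n, E n)).toReal - ∫ x, Pca x (⋃ n, E n) ∂μ) := hμsum.sub hcasum
    simpa [key] using this
  have hlamCA : IsCA lam := ⟨⟨hfa, hnn⟩, hcount⟩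
  have := hU lam hlamCA hsing
  have huniv : lam Set.univ = q2 := by
    have : (fun x => Ppfa x Set.univ) = fun _ => q2 := by
      funext x; exact (hpfa x).2
    simp [hlam, this, hμ1]
    rw [measureReal_def, hμ1, ENNReal.toReal_one, one_mul]
  rw [this] at huniv
  simp at huniv
  linarith
end
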